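/- arXiv:2207.03364 — 2 statements merged into one kernel-verified Lean document; each statement's English description precedes it below -/
import Mathlib

section
/- Let f : 2^V → ℝ≥0 be a nonnegative submodular function, A ⊆ V, and X, Y ⊆ V \ A disjoint. Then max(f(A ∪ X), f(A ∪ Y)) ≥ f(A)/2. -/
theorem submodular_better_of_two {β : Type*} [DecidableEq β]
    (f : Finset β → ℝ)
    (hsub : ∀ S T : Finset β, f (S ∪ T) + f (S ∩ T) ≤ f S + f T)
    (hnonneg : ∀ S : Finset β, 0 ≤ f S)
    (A X Y : Finset β) (hXA : Disjoint X A) (hYA : Disjoint Y A)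
    (hXY : Disjoint X Y) :
    max (f (A ∪ X)) (f (A ∪ Y)) ≥ f A / 2 := by
  have hint : (A ∪ X) ∩ (A ∪ Y) = A := by
    ext a
    simp only [Finset.mem_inter, Finset.mem_union]
    constructor
    · rintro ⟨h1 | h1, h2 | h2⟩ <;> first
        | assumption
        | exact absurd (Finset.mem_inter.mpr ⟨h1, h2⟩)
            (by simp [Finset.disjoint_left.mp hXY h1, h2])
    · exact fun h => ⟨Or.inl h, Or.inl h⟩
  have h := hsub (A ∪ X) (A ∪ Y)
  rw [hint] at h
  have h2 := hnonneg ((A ∪ X) ∪ (A ∪ Y))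
  have hmax1 : f (A ∪ X) ≤ max (f (A ∪ X)) (f (A ∪ Y)) := le_max_left _ _
  have hmax2 : f (A ∪ Y) ≤ max (f (A ∪ X)) (f (A ∪ Y)) := le_max_right _ _
  linarith
end

section
/- Let f : 2^V → ℝ≥0 be submodular and let M ⊆ OPT ⊆ V be constructed greedily so that, writing M(e) for the partial solution just before e was added, f(e' | M) ≤ f(e | M(e)) for every group i, every e' ∈ (OPT \ M) ∩ V_i, and every e ∈ M ∩ V_i. If κ = min_{i∈[m]} |M ∩ V_i| / |OPT ∩ V_i| (with each |OPT ∩ V_i| > 0), then f(OPT) ≤ (1 + 1/κ)·f(M), i.e., f(M) ≥ (κ/(1+κ))·f(OPT). -/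
/-!
By submodularity, `f OPT ≤ f M + ∑_{e' ∈ OPT \ M} f(e' | M)`, while the greedy gains `f(e | M(e))`
telescope to `f M - f ∅`. In each group `V_i` every gain `f(e' | M)` with `e' ∈ OPT \ M` is at most
every greedy gain `f(e | M(e))` with `e ∈ M`, and `M` has at least a `κ`-fraction as many elements
there as `OPT`, so averaging gives `κ ∑_{e' ∈ (OPT \ M) ∩ V_i} f(e' | M) ≤ ∑_{e ∈ M ∩ V_i} f(e | M(e))`.
Summing over the groups bounds the first sum by `f M / κ`.
-/

open Finset

section

variable {β : Type*} [DecidableEq β]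

def marginal (f : Finset β → ℝ) (e : β) (S : Finset β) : ℝ := f (insert e S) - f S

/-- The paper's `M(e)` when `L` lists the greedy picks in order. -/
def prefixBefore (L : List β) (e : β) : Finset β := (L.takeWhile (· ≠ e)).toFinset

lemma prefixBefore_cons_self (a : β) (l : List β) : prefixBefore (a :: l) a = ∅ := by
  simp [prefixBefore]

lemma prefixBefore_cons_of_ne {a e : β} (l : List β) (h : e ≠ a) :
    prefixBefore (a :: l) e = insert a (prefixBefore l e) := by
  simp [prefixBefore, Ne.symm h]

lemma le_add_sum_marginal (f : Finset β → ℝ)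
    (hsub : ∀ S T : Finset β, f (S ∪ T) + f (S ∩ T) ≤ f S + f T) (S A : Finset β) :
    f (S ∪ A) ≤ f S + ∑ e ∈ A, marginal f e S := by
  induction A using Finset.induction_on with
  | empty => simp
  | @insert a A ha ih =>
    have hunion : insert a S ∪ (S ∪ A) = S ∪ insert a A := by
      ext; simp only [mem_union, mem_insert]; tauto
    have hinter : insert a S ∩ (S ∪ A) = S := by
      ext; simp only [mem_inter, mem_insert, mem_union]; aesop
    have := hsub (insert a S) (S ∪ A)
    rw [hunion, hinter] at this
    rw [sum_insert ha, marginal]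
    linarith

/-- The base set `S` is generalized so that the induction on `L` can absorb its head into it. -/
lemma sum_marginal_prefixBefore (f : Finset β → ℝ) (L : List β) (hL : L.Nodup) (S : Finset β) :
    ∑ e ∈ L.toFinset, marginal f e (S ∪ prefixBefore L e) = f (S ∪ L.toFinset) - f S := by
  induction L generalizing S with
  | nil => simp
  | cons a l ih =>
    obtain ⟨hal, hl⟩ := List.nodup_cons.mp hL
    have htail : ∑ e ∈ l.toFinset, marginal f e (S ∪ prefixBefore (a :: l) e)
        = ∑ e ∈ l.toFinset, marginal f e (insert a S ∪ prefixBefore l e) := by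
      refine sum_congr rfl fun e he => ?_
      have hea : e ≠ a := fun h => hal (h ▸ List.mem_toFinset.mp he)
      rw [prefixBefore_cons_of_ne l hea, union_insert, insert_union]
    rw [List.toFinset_cons, sum_insert (mt List.mem_toFinset.mp hal), htail, ih hl,
      prefixBefore_cons_self, union_empty, marginal, insert_union, union_insert]
    ring

lemma sum_eq_sum_sum_inter {ι M : Type*} [Fintype ι] [AddCommMonoid M] (V : ι → Finset β)
    (hV : ∀ i j, i ≠ j → Disjoint (V i) (V j)) (S : Finset β) (hS : ∀ e ∈ S, ∃ i, e ∈ V i)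
    (h : β → M) : ∑ e ∈ S, h e = ∑ i, ∑ e ∈ S ∩ V i, h e := by
  have hcover : S = S ∩ univ.biUnion V :=
    (inter_eq_left.mpr fun e he => by simpa using hS e he).symm
  rw [← sum_biUnion, ← inter_biUnion, ← hcover]
  exact fun i _ j _ hij => (hV i j hij).mono inter_subset_right inter_subset_right

lemma mul_sum_le_sum_of_forall_le {ι ι' : Type*} {O : Finset ι} {P : Finset ι'} {t : ι → ℝ}
    {g : ι' → ℝ} {κ : ℝ} (hκ : 0 < κ) (hcard : κ * #O ≤ #P) (hg : 0 ≤ ∑ y ∈ P, g y)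
    (hle : ∀ x ∈ O, ∀ y ∈ P, t x ≤ g y) : κ * ∑ x ∈ O, t x ≤ ∑ y ∈ P, g y := by
  rcases O.eq_empty_or_nonempty with rfl | hO
  · simpa using hg
  have hP : (0 : ℝ) < #P := lt_of_lt_of_le (by have := hO.card_pos; positivity) hcard
  refine le_of_mul_le_mul_left ?_ hP
  calc (#P : ℝ) * (κ * ∑ x ∈ O, t x) = κ * ∑ x ∈ O, ∑ _y ∈ P, t x := by
        simp only [sum_const, nsmul_eq_mul, ← mul_sum]; ring
    _ ≤ κ * ∑ _x ∈ O, ∑ y ∈ P, g y := by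
        gcongr with x hx y hy; exact hle x hx y hy
    _ = κ * #O * ∑ y ∈ P, g y := by rw [sum_const, nsmul_eq_mul, mul_assoc]
    _ ≤ #P * ∑ y ∈ P, g y := by gcongr
end

theorem greedy_half_approx_general {β : Type*} [DecidableEq β] {m : ℕ}
    (Vg : Fin m → Finset β)
    (hdisj : ∀ i j, i ≠ j → Disjoint (Vg i) (Vg j))
    (f : Finset β → ℝ)
    (hsub : ∀ S T : Finset β, f (S ∪ T) + f (S ∩ T) ≤ f S + f T)
    (hnonneg : ∀ S : Finset β, 0 ≤ f S)
    (OPT : Finset β) (hcover : ∀ e ∈ OPT, ∃ i, e ∈ Vg i)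
    (L : List β) (hnd : L.Nodup) (hML : L.toFinset ⊆ OPT)
    (Mb : β → Finset β)
    (hMb : ∀ e ∈ L, Mb e = (L.takeWhile (· ≠ e)).toFinset)
    (hpos : ∀ e ∈ L, 0 ≤ f (insert e (Mb e)) - f (Mb e))
    (hgreedy : ∀ i, ∀ e' ∈ (OPT \ L.toFinset) ∩ Vg i, ∀ e ∈ L.toFinset ∩ Vg i,
      f (insert e' L.toFinset) - f L.toFinset ≤ f (insert e (Mb e)) - f (Mb e))
    (κ : ℝ) (hκ : 0 < κ)
    (hκle : ∀ i, κ ≤ ((L.toFinset ∩ Vg i).card : ℝ) / ((OPT ∩ Vg i).card : ℝ)) :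
    f OPT ≤ (1 + 1 / κ) * f L.toFinset ∧
    κ / (1 + κ) * f OPT ≤ f L.toFinset := by
  set M := L.toFinset
  have hgroup : ∀ i, κ * ∑ e' ∈ (OPT \ M) ∩ Vg i, marginal f e' M
      ≤ ∑ e ∈ M ∩ Vg i, marginal f e (Mb e) := by
    intro i
    have hsubset : (OPT \ M) ∩ Vg i ⊆ OPT ∩ Vg i := inter_subset_inter_right sdiff_subset
    refine mul_sum_le_sum_of_forall_le hκ ?_ ?_ (hgreedy i)
    · calc κ * #((OPT \ M) ∩ Vg i) ≤ κ * #(OPT ∩ Vg i) := by gcongr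
        _ ≤ #(M ∩ Vg i) := mul_le_of_le_div₀ (by positivity) (by positivity) (hκle i)
    · exact sum_nonneg fun e he => hpos e (List.mem_toFinset.mp (mem_inter.mp he).1)
  have htelescope : ∑ e ∈ M, marginal f e (Mb e) = f M - f ∅ := by
    have := sum_marginal_prefixBefore f L hnd ∅
    simp only [empty_union] at this
    rw [← this]
    exact sum_congr rfl fun e he => by rw [hMb e (List.mem_toFinset.mp he), prefixBefore]
  have hgain : κ * ∑ e' ∈ OPT \ M, marginal f e' M ≤ f M := by
    rw [sum_eq_sum_sum_inter Vg hdisj _ fun e he => hcover e (sdiff_subset he), mul_sum]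
    calc _ ≤ ∑ i, ∑ e ∈ M ∩ Vg i, marginal f e (Mb e) := sum_le_sum fun i _ => hgroup i
      _ = f M - f ∅ := by
        rw [← sum_eq_sum_sum_inter Vg hdisj _ fun e he => hcover e (hML he), htelescope]
      _ ≤ f M := by linarith [hnonneg ∅]
  have hOPT : f OPT ≤ f M + ∑ e' ∈ OPT \ M, marginal f e' M := by
    simpa [union_sdiff_of_subset hML] using le_add_sum_marginal f hsub M (OPT \ M)
  constructor
  · have : ∑ e' ∈ OPT \ M, marginal f e' M ≤ f M / κ := by
      rw [le_div_iff₀ hκ]; linarith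
    calc f OPT ≤ f M + f M / κ := by linarith
      _ = (1 + 1 / κ) * f M := by ring
  · rw [div_mul_eq_mul_div, div_le_iff₀ (by positivity)]
    nlinarith [mul_le_mul_of_nonneg_left hOPT hκ.le]

theorem greedy_half_approx {β : Type*} [DecidableEq β] {m : ℕ}
    (Vg : Fin m → Finset β)
    (hdisj : ∀ i j, i ≠ j → Disjoint (Vg i) (Vg j))
    (f : Finset β → ℝ)
    (hsub : ∀ S T : Finset β, f (S ∪ T) + f (S ∩ T) ≤ f S + f T)
    (hnonneg : ∀ S : Finset β, 0 ≤ f S)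
    (OPT : Finset β) (hcover : ∀ e ∈ OPT, ∃ i, e ∈ Vg i)
    (L : List β) (hnd : L.Nodup) (hML : L.toFinset ⊆ OPT)
    (Mb : β → Finset β)
    (hMb : ∀ e ∈ L, Mb e = (L.takeWhile (· ≠ e)).toFinset)
    (hpos : ∀ e ∈ L, 0 ≤ f (insert e (Mb e)) - f (Mb e))
    (hgreedy : ∀ i, ∀ e' ∈ (OPT \ L.toFinset) ∩ Vg i, ∀ e ∈ L.toFinset ∩ Vg i,
      f (insert e' L.toFinset) - f L.toFinset ≤ f (insert e (Mb e)) - f (Mb e))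
    (κ : ℝ) (hκ : 0 < κ)
    (hcard : ∀ i, 0 < (OPT ∩ Vg i).card)
    (hκle : ∀ i, κ ≤ ((L.toFinset ∩ Vg i).card : ℝ) / ((OPT ∩ Vg i).card : ℝ)) :
    f OPT ≤ (1 + 1 / κ) * f L.toFinset ∧
    κ / (1 + κ) * f OPT ≤ f L.toFinset :=
  greedy_half_approx_general Vg hdisj f hsub hnonneg OPT hcover L hnd hML Mb hMb hpos hgreedy κ hκ
    hκle
end
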